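/- arXiv:1612.01469 — 2 statements merged into one kernel-verified Lean document; each statement's English description precedes it below -/
import Mathlib

section
/- Let Ω be a cyclic group of order p-1 (p an odd prime) and fix 0 < r ≤ (p-1)/2. Let V and W be one-dimensional F_p-bar-modules over the algebra H_v generated by T_t (t∈Ω) and T_s with relations T_{t1}T_{t2}=T_{t1t2}, T_tT_s=T_sT_{t^{-1}}, T_s^2=-e_1T_s, where T_t acts on V by t^r and on W by t^s (identifying Ω with F_p^×), and T_s acts by 0 on both. If there exists a non-split extension of W by V of H_v-modules, then r + s ≡ p - 1 (mod p-1). -/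
/-! The finite pro-p Iwahori Hecke algebra of SL₂(𝔽_p) type, presented by generators
`T_t` (t ∈ Ω, a finite abelian group) and `T_s`, with relations
`T_{t₁} * T_{t₂} = T_{t₁ t₂}`, `T_t * T_s = T_s * T_{t⁻¹}` and
`T_s ^ 2 = -e₁ * T_s` where `e₁ = ∑ t, T_t`. -/

noncomputable section

/-- An algebraic closure of `𝔽_p`. -/
abbrev Fbar (p : ℕ) [Fact p.Prime] : Type := AlgebraicClosure (ZMod p)

/-- The defining relations of the Hecke algebra. -/
inductive HeckeRel (p : ℕ) [Fact p.Prime] (Ω : Type) [CommGroup Ω] [Fintype Ω] :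
    FreeAlgebra (Fbar p) (Ω ⊕ Unit) → FreeAlgebra (Fbar p) (Ω ⊕ Unit) → Prop
  | mul (t₁ t₂ : Ω) : HeckeRel p Ω
      (FreeAlgebra.ι (Fbar p) (Sum.inl t₁) * FreeAlgebra.ι (Fbar p) (Sum.inl t₂))
      (FreeAlgebra.ι (Fbar p) (Sum.inl (t₁ * t₂)))
  | comm (t : Ω) : HeckeRel p Ω
      (FreeAlgebra.ι (Fbar p) (Sum.inl t) * FreeAlgebra.ι (Fbar p) (Sum.inr ()))
      (FreeAlgebra.ι (Fbar p) (Sum.inr ()) * FreeAlgebra.ι (Fbar p) (Sum.inl t⁻¹))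
  | quad : HeckeRel p Ω
      (FreeAlgebra.ι (Fbar p) (Sum.inr ()) * FreeAlgebra.ι (Fbar p) (Sum.inr ()))
      (-(∑ t : Ω, FreeAlgebra.ι (Fbar p) (Sum.inl t)) * FreeAlgebra.ι (Fbar p) (Sum.inr ()))

/-- The Hecke algebra `H`, as the quotient of the free algebra by the defining relations. -/
abbrev Hecke (p : ℕ) [Fact p.Prime] (Ω : Type) [CommGroup Ω] [Fintype Ω] : Type :=
  RingQuot (HeckeRel p Ω)

/-- The generator `T_t` of the Hecke algebra. -/
def HeckeT {p : ℕ} [Fact p.Prime] {Ω : Type} [CommGroup Ω] [Fintype Ω] (t : Ω) : Hecke p Ω :=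
  RingQuot.mkAlgHom (Fbar p) (HeckeRel p Ω) (FreeAlgebra.ι (Fbar p) (Sum.inl t))

/-- The generator `T_s` of the Hecke algebra. -/
def HeckeS {p : ℕ} [Fact p.Prime] {Ω : Type} [CommGroup Ω] [Fintype Ω] : Hecke p Ω :=
  RingQuot.mkAlgHom (Fbar p) (HeckeRel p Ω) (FreeAlgebra.ι (Fbar p) (Sum.inr ()))

/-! Lift a basis vector of `W` to `E` and apply `∑ t, χ_s(t) T_{t⁻¹}`, which acts on `W` by
`p - 1 = -1 ≠ 0`: this gives a lift `e` on which `Ω` acts through `χ_s`. If `T_s e = 0`, the whole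
algebra acts on `e` through the character of `W`, and `w ↦ e` splits the extension. Otherwise
`T_s e` is a nonzero vector of `V`, and `T_t T_s = T_s T_{t⁻¹}` shows that `Ω` acts on it through
`χ_s⁻¹`; comparing with `χ_r` gives `t^(r+s) = 1` on the cyclic group `𝔽_p^×` of order `p - 1`. -/

namespace Hecke

variable {p : ℕ} [Fact p.Prime] {Ω : Type} [CommGroup Ω] [Fintype Ω]

theorem heckeT_mul_heckeT (t₁ t₂ : Ω) :
    (HeckeT t₁ : Hecke p Ω) * HeckeT t₂ = HeckeT (t₁ * t₂) := by
  rw [HeckeT, HeckeT, HeckeT, ← map_mul]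
  exact RingQuot.mkAlgHom_rel (Fbar p) (HeckeRel.mul t₁ t₂)

theorem heckeT_mul_heckeS (t : Ω) :
    (HeckeT t : Hecke p Ω) * HeckeS = HeckeS * HeckeT t⁻¹ := by
  rw [HeckeT, HeckeT, HeckeS, ← map_mul, ← map_mul]
  exact RingQuot.mkAlgHom_rel (Fbar p) (HeckeRel.comm t)

@[elab_as_elim]
theorem induction_on {motive : Hecke p Ω → Prop} (h : Hecke p Ω)
    (algebraMap : ∀ a, motive (algebraMap (Fbar p) (Hecke p Ω) a))
    (heckeT : ∀ t, motive (HeckeT t)) (heckeS : motive HeckeS)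
    (add : ∀ a b, motive a → motive b → motive (a + b))
    (mul : ∀ a b, motive a → motive b → motive (a * b)) : motive h := by
  obtain ⟨x, rfl⟩ := RingQuot.mkAlgHom_surjective (Fbar p) (HeckeRel p Ω) h
  induction x with
  | grade0 a => simpa only [AlgHom.commutes] using algebraMap a
  | grade1 i => rcases i with t | ⟨⟩; exacts [heckeT t, heckeS]
  | mul x y hx hy => simpa only [map_mul] using mul _ _ hx hy
  | add x y hx hy => simpa only [map_add] using add _ _ hx hy

-- The character by which the algebra acts on the paper's one-dimensional module `χ_{ψ,∅}`.
def character (ψ : Ω →* Fbar p) : Hecke p Ω →ₐ[Fbar p] Fbar p :=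
  RingQuot.liftAlgHom (Fbar p) ⟨FreeAlgebra.lift (Fbar p) (Sum.elim ψ 0), by
    rintro _ _ (_ | _ | _) <;> simp⟩

@[simp]
theorem character_heckeT (ψ : Ω →* Fbar p) (t : Ω) : character ψ (HeckeT t) = ψ t := by
  simp [character, HeckeT]

@[simp]
theorem character_heckeS (ψ : Ω →* Fbar p) : character ψ (HeckeS : Hecke p Ω) = 0 := by
  simp [character, HeckeS]

theorem smul_eq_character_smul {M : Type*} [AddCommMonoid M] [Module (Hecke p Ω) M]
    (ψ : Ω →* Fbar p) {x : M}
    (hT : ∀ t, (HeckeT t : Hecke p Ω) • x = algebraMap (Fbar p) (Hecke p Ω) (ψ t) • x)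
    (hS : (HeckeS : Hecke p Ω) • x = 0) (h : Hecke p Ω) :
    h • x = algebraMap (Fbar p) (Hecke p Ω) (character ψ h) • x := by
  induction h using induction_on with
  | algebraMap a => simp
  | heckeT t => simpa using hT t
  | heckeS => simpa using hS
  | add a b ha hb => simp only [add_smul, ha, hb, map_add]
  | mul a b ha hb =>
    rw [mul_smul, hb, ← mul_smul, ← Algebra.commutes, mul_smul, ha, ← mul_smul, ← map_mul,
      map_mul (character ψ), mul_comm]

-- `(card Ω)⁻¹ • eigenProjector ψ` is the idempotent of `𝔽̄_p[Ω]` cutting out the `ψ`-eigenspace.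
def eigenProjector (ψ : Ω →* Fbar p) : Hecke p Ω :=
  ∑ t, algebraMap (Fbar p) (Hecke p Ω) (ψ t) * HeckeT t⁻¹

theorem heckeT_mul_eigenProjector (ψ : Ω →* Fbar p) (u : Ω) :
    HeckeT u * eigenProjector ψ = algebraMap (Fbar p) (Hecke p Ω) (ψ u) * eigenProjector ψ := by
  simp only [eigenProjector, Finset.mul_sum]
  refine Fintype.sum_equiv (Equiv.mulRight u⁻¹) _ _ fun t => ?_
  rw [← mul_assoc, ← Algebra.commutes, mul_assoc, heckeT_mul_heckeT, ← mul_assoc, ← map_mul,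
    ← map_mul]
  simp

theorem character_eigenProjector (ψ : Ω →* Fbar p) :
    character ψ (eigenProjector ψ) = Fintype.card Ω := by
  simp only [eigenProjector, map_sum, map_mul, AlgHom.commutes, Algebra.algebraMap_self,
    RingHom.id_apply, character_heckeT, ← map_mul ψ, mul_inv_cancel, map_one]
  simp

theorem heckeT_smul_heckeS_smul {M : Type*} [AddCommMonoid M] [Module (Hecke p Ω) M]
    (ψ : Ω →* Fbar p) {x : M}
    (hT : ∀ t, (HeckeT t : Hecke p Ω) • x = algebraMap (Fbar p) (Hecke p Ω) (ψ t) • x) (u : Ω) :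
    (HeckeT u : Hecke p Ω) • (HeckeS : Hecke p Ω) • x =
      algebraMap (Fbar p) (Hecke p Ω) (ψ u⁻¹) • (HeckeS : Hecke p Ω) • x := by
  rw [← mul_smul, heckeT_mul_heckeS, mul_smul, hT, ← mul_smul, ← Algebra.commutes, mul_smul]

end Hecke

section Algebra

variable {K A : Type*} [Field K] [Ring A] [Algebra K A]

theorem algebraMap_smul_left_injective {M : Type*} [AddCommGroup M] [Module A M] {x : M}
    (hx : x ≠ 0) : Function.Injective fun a : K ↦ algebraMap K A a • x := by
  intro a b hab
  by_contra hne
  apply hx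
  have hsub : algebraMap K A (a - b) • x = 0 := by
    rw [map_sub, sub_smul, sub_eq_zero]
    exact hab
  calc x = algebraMap K A ((a - b)⁻¹ * (a - b)) • x := by
        rw [inv_mul_cancel₀ (sub_ne_zero.mpr hne), map_one, one_smul]
    _ = 0 := by rw [map_mul, mul_smul, hsub, smul_zero]

theorem LinearMap.exists_rightInverse_of_eigenvector {W E : Type*} [AddCommGroup W] [Module K W]
    [Module A W] [IsScalarTower K A W] [AddCommGroup E] [Module A E] (χ : A →ₐ[K] K)
    (hW : ∀ (h : A) (w : W), h • w = χ h • w) (hdim : Module.finrank K W = 1)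
    (g : E →ₗ[A] W) {e : E} (he : g e ≠ 0) (hχ : ∀ h : A, h • e = algebraMap K A (χ h) • e) :
    ∃ σ : W →ₗ[A] E, g.comp σ = LinearMap.id := by
  let b := FiniteDimensional.basisSingleton Unit hdim (g e) he
  let c := b.coord ()
  have hc (w : W) : c w • g e = w := by
    have := b.sum_repr w
    rwa [Fintype.sum_unique, FiniteDimensional.basisSingleton_apply] at this
  refine ⟨{ toFun := fun w ↦ algebraMap K A (c w) • e, map_add' := ?_, map_smul' := ?_ }, ?_⟩
  · intro w w'
    simp only [map_add, add_smul]
  · intro h w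
    rw [RingHom.id_apply, hW h w, map_smul, smul_eq_mul, mul_comm, map_mul, mul_smul, ← hχ,
      ← mul_smul, Algebra.commutes, mul_smul]
  · ext w
    simp [hc]

end Algebra

def powerCharacter (p : ℕ) [Fact p.Prime] (n : ℕ) : (ZMod p)ˣ →* Fbar p :=
  (powMonoidHom n).comp ((algebraMap (ZMod p) (Fbar p)).toMonoidHom.comp (Units.coeHom (ZMod p)))

theorem powerCharacter_apply (p : ℕ) [Fact p.Prime] (n : ℕ) (t : (ZMod p)ˣ) :
    powerCharacter p n t = algebraMap (ZMod p) (Fbar p) t ^ n :=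
  rfl

theorem natCast_card_units_zmod_ne_zero (p : ℕ) [Fact p.Prime] :
    (Fintype.card (ZMod p)ˣ : Fbar p) ≠ 0 := by
  have hp : 1 ≤ p := (Fact.out : p.Prime).one_le
  rw [ZMod.card_units, ← map_natCast (algebraMap (ZMod p) (Fbar p)), Nat.cast_sub hp]
  simp

theorem sub_one_dvd_of_powerCharacter_eq_inv (p : ℕ) [Fact p.Prime] {r s : ℕ}
    (h : ∀ u, powerCharacter p r u = powerCharacter p s u⁻¹) : p - 1 ∣ r + s := by
  have hpow : ∀ u : (ZMod p)ˣ, u ^ (r + s) = 1 := fun u ↦ by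
    have h1 : powerCharacter p r u * powerCharacter p s u = 1 := by
      rw [h u, ← map_mul, inv_mul_cancel, map_one]
    rw [powerCharacter_apply, powerCharacter_apply, ← pow_add, ← map_pow,
      ← map_one (algebraMap (ZMod p) (Fbar p))] at h1
    exact Units.ext (by simpa using (algebraMap (ZMod p) (Fbar p)).injective h1)
  rw [← ZMod.card_units p, ← Nat.card_eq_fintype_card, ← IsCyclic.exponent_eq_card]
  exact Monoid.exponent_dvd_iff_forall_pow_eq_one.mpr hpow

theorem nonsplit_extension_characters_general (p : ℕ) [Fact p.Prime]
    (r s : ℕ)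
    (V W : Type) [AddCommGroup V] [AddCommGroup W]
    [Module (Hecke p (ZMod p)ˣ) V] [Module (Hecke p (ZMod p)ˣ) W]
    [Module (Fbar p) V] [IsScalarTower (Fbar p) (Hecke p (ZMod p)ˣ) V]
    [Module (Fbar p) W] [IsScalarTower (Fbar p) (Hecke p (ZMod p)ˣ) W]
    (hWdim : Module.finrank (Fbar p) W = 1)
    (hVt : ∀ (t : (ZMod p)ˣ) (v : V),
      (HeckeT t : Hecke p (ZMod p)ˣ) • v = (algebraMap (ZMod p) (Fbar p) (t : ZMod p)) ^ r • v)
    (hWt : ∀ (t : (ZMod p)ˣ) (w : W),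
      (HeckeT t : Hecke p (ZMod p)ˣ) • w = (algebraMap (ZMod p) (Fbar p) (t : ZMod p)) ^ s • w)
    (hWs : ∀ w : W, (HeckeS : Hecke p (ZMod p)ˣ) • w = 0)
    -- a non-split extension `0 → V → E → W → 0` of `H_v`-modules
    (E : Type) [AddCommGroup E] [Module (Hecke p (ZMod p)ˣ) E]
    (f : V →ₗ[Hecke p (ZMod p)ˣ] E) (g : E →ₗ[Hecke p (ZMod p)ˣ] W)
    (hg : Function.Surjective g)
    (hexact : LinearMap.range f = LinearMap.ker g)
    (hnonsplit : ¬ ∃ σ : W →ₗ[Hecke p (ZMod p)ˣ] E, g.comp σ = LinearMap.id) :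
    r + s ≡ p - 1 [MOD p - 1] := by
  set ψ := powerCharacter p s
  have hW (h : Hecke p (ZMod p)ˣ) (w : W) : h • w = Hecke.character ψ h • w := by
    rw [Hecke.smul_eq_character_smul ψ (fun t ↦ by rw [algebraMap_smul, hWt]; rfl) (hWs w),
      algebraMap_smul]
  obtain ⟨e, he⟩ : ∃ e, g e ≠ 0 := by
    have := Module.nontrivial_of_finrank_eq_succ hWdim
    obtain ⟨w, hw⟩ := exists_ne (0 : W)
    obtain ⟨e, rfl⟩ := hg w
    exact ⟨e, hw⟩
  set eψ := Hecke.eigenProjector ψ • e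
  have hT (t : (ZMod p)ˣ) :
      (HeckeT t : Hecke p (ZMod p)ˣ) • eψ = algebraMap (Fbar p) (Hecke p (ZMod p)ˣ) (ψ t) • eψ := by
    simp only [eψ, ← mul_smul, Hecke.heckeT_mul_eigenProjector]
  have hgeψ : g eψ ≠ 0 := by
    rw [map_smul, hW, Hecke.character_eigenProjector]
    exact smul_ne_zero (natCast_card_units_zmod_ne_zero p) he
  have hSeψ : (HeckeS : Hecke p (ZMod p)ˣ) • eψ ≠ 0 := fun hS ↦ hnonsplit <|
    LinearMap.exists_rightInverse_of_eigenvector (Hecke.character ψ) hW hWdim g hgeψ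
      (Hecke.smul_eq_character_smul ψ hT hS)
  obtain ⟨v, hv⟩ : (HeckeS : Hecke p (ZMod p)ˣ) • eψ ∈ LinearMap.range f := by
    rw [hexact, LinearMap.mem_ker, map_smul, hWs]
  have hrs (u : (ZMod p)ˣ) : powerCharacter p r u = ψ u⁻¹ :=
    algebraMap_smul_left_injective hSeψ <| by
      dsimp only
      rw [← Hecke.heckeT_smul_heckeS_smul ψ hT, ← hv, ← map_smul, ← map_smul, hVt,
        algebraMap_smul]
      rfl
  exact (Nat.modEq_zero_iff_dvd.2 (sub_one_dvd_of_powerCharacter_eq_inv p hrs)).trans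
    (Nat.modEq_zero_iff_dvd.2 dvd_rfl).symm

/-- if `V` and `W` are the one-dimensional `H_v`-modules on which `T_t`
acts by `t^r` resp. `t^s` (identifying `Ω` with `𝔽_p^×`) and `T_s` acts by `0`,
and there is a non-split extension of `W` by `V`, then `r + s ≡ p - 1 (mod p-1)`. -/
theorem nonsplit_extension_characters (p : ℕ) [Fact p.Prime] (hp : Odd p)
    (r s : ℕ) (hr : 0 < r) (hr' : r ≤ (p - 1) / 2)
    (V W : Type) [AddCommGroup V] [AddCommGroup W]
    [Module (Hecke p (ZMod p)ˣ) V] [Module (Hecke p (ZMod p)ˣ) W]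
    [Module (Fbar p) V] [IsScalarTower (Fbar p) (Hecke p (ZMod p)ˣ) V]
    [Module (Fbar p) W] [IsScalarTower (Fbar p) (Hecke p (ZMod p)ˣ) W]
    (hVdim : Module.finrank (Fbar p) V = 1) (hWdim : Module.finrank (Fbar p) W = 1)
    (hVt : ∀ (t : (ZMod p)ˣ) (v : V),
      (HeckeT t : Hecke p (ZMod p)ˣ) • v = (algebraMap (ZMod p) (Fbar p) (t : ZMod p)) ^ r • v)
    (hVs : ∀ v : V, (HeckeS : Hecke p (ZMod p)ˣ) • v = 0)
    (hWt : ∀ (t : (ZMod p)ˣ) (w : W),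
      (HeckeT t : Hecke p (ZMod p)ˣ) • w = (algebraMap (ZMod p) (Fbar p) (t : ZMod p)) ^ s • w)
    (hWs : ∀ w : W, (HeckeS : Hecke p (ZMod p)ˣ) • w = 0)
    -- a non-split extension `0 → V → E → W → 0` of `H_v`-modules
    (E : Type) [AddCommGroup E] [Module (Hecke p (ZMod p)ˣ) E]
    (f : V →ₗ[Hecke p (ZMod p)ˣ] E) (g : E →ₗ[Hecke p (ZMod p)ˣ] W)
    (hf : Function.Injective f) (hg : Function.Surjective g)
    (hexact : LinearMap.range f = LinearMap.ker g)
    (hnonsplit : ¬ ∃ σ : W →ₗ[Hecke p (ZMod p)ˣ] E, g.comp σ = LinearMap.id) :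
    r + s ≡ p - 1 [MOD p - 1] :=
  nonsplit_extension_characters_general p r s V W hWdim hVt hWt hWs E f g hg hexact hnonsplit
end
end

section
/- Let p be an odd prime, Ω ≅ F_p^× cyclic of order p-1, and 0 < r < p-1. Define a 2-dimensional F_p-bar vector space E = F_p-bar e_0 ⊕ F_p-bar e_1 with T_t e_0 = t^r e_0, T_t e_1 = t^{p-1-r} e_1, T_s e_0 = 0, and T_s e_1 = c e_0 for a fixed c ≠ 0. Then these formulas define an H_v-module structure on E (i.e. they satisfy T_{t1}T_{t2}=T_{t1t2}, T_tT_s=T_sT_{t^{-1}}, T_s^2=-e_1T_s with e_1=Σ_t T_t), and E is a non-split extension of the character χ_{p-1-r,∅} by χ_{r,∅}. -/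
/-! The finite pro-p Iwahori Hecke algebra of SL₂(𝔽_p) type, presented by generators
`T_t` (t ∈ Ω, a finite abelian group) and `T_s`, with relations
`T_{t₁} * T_{t₂} = T_{t₁ t₂}`, `T_t * T_s = T_s * T_{t⁻¹}` and
`T_s ^ 2 = -e₁ * T_s` where `e₁ = ∑ t, T_t`. -/

noncomputable section

/-- The assertion that a given `H_v`-module structure on `E = 𝔽̄_p ⊕ 𝔽̄_p` realizes the
formulas `T_t e₀ = t^r e₀`, `T_t e₁ = t^{p-1-r} e₁`, `T_s e₀ = 0`, `T_s e₁ = c e₀`,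
and that the resulting extension `0 → χ_{r,∅} → E → χ_{p-1-r,∅} → 0` is non-split
(there is no `H_v`-linear projection of `E` onto the first factor). -/
def IsNonsplitExtensionModule (p : ℕ) [Fact p.Prime] (r : ℕ) (c : Fbar p)
    (inst : Module (Hecke p (ZMod p)ˣ) (Fbar p × Fbar p)) : Prop :=
  letI := inst
  (∀ (t : (ZMod p)ˣ) (x y : Fbar p),
      (HeckeT t : Hecke p (ZMod p)ˣ) • ((x, y) : Fbar p × Fbar p) =
        (algebraMap (ZMod p) (Fbar p) (t : ZMod p) ^ r * x,
         algebraMap (ZMod p) (Fbar p) (t : ZMod p) ^ (p - 1 - r) * y)) ∧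
  (∀ x y : Fbar p,
      (HeckeS : Hecke p (ZMod p)ˣ) • ((x, y) : Fbar p × Fbar p) = (c * y, 0)) ∧
  ¬ ∃ π : (Fbar p × Fbar p) →ₗ[Hecke p (ZMod p)ˣ] (Fbar p × Fbar p),
      (∀ x : Fbar p, π (x, 0) = (x, 0)) ∧ (∀ v : Fbar p × Fbar p, (π v).2 = 0)

namespace NonsplitAux

variable (p : ℕ) [Fact p.Prime]

/-- The character value of a unit in `Fbar p`. -/
noncomputable def chi (t : (ZMod p)ˣ) : Fbar p :=
  algebraMap (ZMod p) (Fbar p) (t : ZMod p)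

lemma chi_mul (t₁ t₂ : (ZMod p)ˣ) : chi p (t₁ * t₂) = chi p t₁ * chi p t₂ := by
  simp [chi, map_mul]

lemma chi_pow_card_sub_one (t : (ZMod p)ˣ) : chi p t ^ (p - 1) = 1 := by
  have h : (t : ZMod p) ^ (p - 1) = 1 := by
    have := ZMod.units_pow_card_sub_one_eq_one p t
    have := congrArg (Units.val) this
    simpa using this
  simp [chi, ← map_pow, h]

lemma chi_inv_key (t : (ZMod p)ˣ) : chi p t * chi p t⁻¹ = 1 := by
  rw [← chi_mul, mul_inv_cancel]
  simp [chi]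

lemma sum_chi_pow (k : ℕ) (hk0 : 0 < k) (hk : k < p - 1) :
    ∑ t : (ZMod p)ˣ, chi p t ^ k = 0 := by
  classical
  have h : (∑ t : (ZMod p)ˣ, ((t : ZMod p)) ^ k) = 0 := by
    have h2 := FiniteField.sum_pow_units (ZMod p) k
    rw [ZMod.card] at h2
    rw [h2, if_neg]
    intro hdvd
    exact absurd (Nat.le_of_dvd hk0 hdvd) (not_le.mpr hk)
  calc ∑ t : (ZMod p)ˣ, chi p t ^ k
      = algebraMap (ZMod p) (Fbar p) (∑ t : (ZMod p)ˣ, ((t : ZMod p)) ^ k) := by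
        simp [chi, map_sum, map_pow]
    _ = 0 := by rw [h, map_zero]

/-- Images of the generators. -/
noncomputable def gen (r : ℕ) (c : Fbar p) :
    ((ZMod p)ˣ ⊕ Unit) → ((Fbar p × Fbar p) →ₗ[Fbar p] (Fbar p × Fbar p))
  | Sum.inl t => LinearMap.prodMap ((chi p t ^ r) • LinearMap.id)
      ((chi p t ^ (p - 1 - r)) • LinearMap.id)
  | Sum.inr _ => LinearMap.prod (c • LinearMap.snd (Fbar p) (Fbar p) (Fbar p)) 0

lemma gen_inl (r : ℕ) (c : Fbar p) (t : (ZMod p)ˣ) (x y : Fbar p) :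
    gen p r c (Sum.inl t) (x, y) = (chi p t ^ r * x, chi p t ^ (p - 1 - r) * y) := by
  simp [gen]

lemma gen_inr (r : ℕ) (c : Fbar p) (x y : Fbar p) :
    gen p r c (Sum.inr ()) (x, y) = (c * y, 0) := by
  simp [gen]

end NonsplitAux

open NonsplitAux in
/-- the formulas `T_t e₀ = t^r e₀`, `T_t e₁ = t^{p-1-r} e₁`, `T_s e₀ = 0`,
`T_s e₁ = c e₀` (with `c ≠ 0`) define an `H_v`-module structure on
`E = 𝔽̄_p e₀ ⊕ 𝔽̄_p e₁` which is a non-split extension of `χ_{p-1-r,∅}` by `χ_{r,∅}`. -/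
theorem exists_nonsplit_extension (p : ℕ) [Fact p.Prime] (hp : Odd p)
    (r : ℕ) (hr : 0 < r) (hr' : r < p - 1) (c : Fbar p) (hc : c ≠ 0) :
    ∃ inst : Module (Hecke p (ZMod p)ˣ) (Fbar p × Fbar p),
      IsNonsplitExtensionModule p r c inst := by
  classical
  set F : FreeAlgebra (Fbar p) ((ZMod p)ˣ ⊕ Unit) →ₐ[Fbar p]
      ((Fbar p × Fbar p) →ₗ[Fbar p] (Fbar p × Fbar p)) :=
    FreeAlgebra.lift (Fbar p) (gen p r c) with hF
  have hrel : ∀ ⦃a b : FreeAlgebra (Fbar p) ((ZMod p)ˣ ⊕ Unit)⦄,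
      HeckeRel p (ZMod p)ˣ a b → F a = F b := by
    intro a b h
    induction h with
    | mul t₁ t₂ =>
        apply LinearMap.ext; rintro ⟨x, y⟩
        simp only [map_mul, FreeAlgebra.lift_ι_apply, hF, Module.End.mul_apply]
        rw [gen_inl, gen_inl, gen_inl, chi_mul, mul_pow, mul_pow]
        exact Prod.ext (by dsimp; ring) (by dsimp; ring)
    | comm t =>
        apply LinearMap.ext; rintro ⟨x, y⟩
        simp only [map_mul, FreeAlgebra.lift_ι_apply, hF, Module.End.mul_apply]
        rw [gen_inr, gen_inl, gen_inl, gen_inr]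
        have h1 : chi p t ^ r * chi p t ^ (p - 1 - r) = 1 := by
          rw [← pow_add]
          have : r + (p - 1 - r) = p - 1 := by omega
          rw [this, chi_pow_card_sub_one]
        have h2 : chi p t ^ r * chi p t⁻¹ ^ r = 1 := by
          rw [← mul_pow, chi_inv_key, one_pow]
        have key : chi p t ^ r = chi p t⁻¹ ^ (p - 1 - r) := by
          have h3 : chi p t⁻¹ ^ r * chi p t⁻¹ ^ (p - 1 - r) = 1 := by
            rw [← pow_add]
            have : r + (p - 1 - r) = p - 1 := by omega
            rw [this]
            have h4 : chi p t ^ (p - 1) * chi p t⁻¹ ^ (p - 1) = 1 := by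
              rw [← mul_pow, chi_inv_key, one_pow]
            rw [chi_pow_card_sub_one, one_mul] at h4
            exact h4
          calc chi p t ^ r = chi p t ^ r * (chi p t⁻¹ ^ r * chi p t⁻¹ ^ (p - 1 - r)) := by
                rw [h3, mul_one]
            _ = (chi p t ^ r * chi p t⁻¹ ^ r) * chi p t⁻¹ ^ (p - 1 - r) := by ring
            _ = chi p t⁻¹ ^ (p - 1 - r) := by rw [h2, one_mul]
        refine Prod.ext ?_ (by simp)
        show chi p t ^ r * (c * y) = c * (chi p t⁻¹ ^ (p - 1 - r) * y)
        rw [← key]; ring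
    | quad =>
        apply LinearMap.ext; rintro ⟨x, y⟩
        simp only [map_mul, map_neg, map_sum, FreeAlgebra.lift_ι_apply, hF,
          Module.End.mul_apply, LinearMap.neg_apply, LinearMap.sum_apply]
        rw [gen_inr, gen_inr, mul_zero]
        have hterm : ∀ t : (ZMod p)ˣ,
            gen p r c (Sum.inl t) ((c : Fbar p) * y, (0 : Fbar p)) =
              (chi p t ^ r * (c * y), 0) := by
          intro t; rw [gen_inl, mul_zero]
        rw [Finset.sum_congr rfl (fun t _ => hterm t)]
        have hsum : (∑ t : (ZMod p)ˣ, (chi p t ^ r * (c * y), (0 : Fbar p))) =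
            ((0 : Fbar p), (0 : Fbar p)) := by
          rw [Prod.ext_iff, Prod.fst_sum, Prod.snd_sum]
          constructor
          · simp [← Finset.sum_mul, sum_chi_pow p r hr hr']
          · simp
        rw [hsum]
        simp
  set φ : Hecke p (ZMod p)ˣ →ₐ[Fbar p]
      ((Fbar p × Fbar p) →ₗ[Fbar p] (Fbar p × Fbar p)) :=
    RingQuot.liftAlgHom (Fbar p) ⟨F, hrel⟩ with hφ
  have hφT : ∀ t : (ZMod p)ˣ, φ (HeckeT t) = gen p r c (Sum.inl t) := by
    intro t
    rw [hφ, HeckeT, RingQuot.liftAlgHom_mkAlgHom_apply, hF, FreeAlgebra.lift_ι_apply]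
  have hφS : φ HeckeS = gen p r c (Sum.inr ()) := by
    rw [hφ, HeckeS, RingQuot.liftAlgHom_mkAlgHom_apply, hF, FreeAlgebra.lift_ι_apply]
  letI inst : Module (Hecke p (ZMod p)ˣ) (Fbar p × Fbar p) :=
    Module.compHom (Fbar p × Fbar p)
      (φ.toRingHom.comp (RingHom.id (Hecke p (ZMod p)ˣ)))
  have hsmul : ∀ (h : Hecke p (ZMod p)ˣ) (v : Fbar p × Fbar p), h • v = φ h v := fun _ _ => rfl
  refine ⟨inst, ?_, ?_, ?_⟩
  · intro t x y
    rw [hsmul, hφT, gen_inl]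
    rfl
  · intro x y
    rw [hsmul, hφS, gen_inr]
  · rintro ⟨π, hπ1, hπ2⟩
    have h0 : π (0, 1) = ((π (0, 1)).1, 0) := by
      rw [Prod.ext_iff]
      exact ⟨rfl, hπ2 _⟩
    have h1 : π ((HeckeS : Hecke p (ZMod p)ˣ) • ((0 : Fbar p), (1 : Fbar p))) =
        (HeckeS : Hecke p (ZMod p)ˣ) • π (0, 1) := (map_smul π _ _).symm ▸ rfl
    have hS : (HeckeS : Hecke p (ZMod p)ˣ) • ((0 : Fbar p), (1 : Fbar p)) = (c, 0) := by
      rw [hsmul, hφS, gen_inr, mul_one]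
    have hS2 : (HeckeS : Hecke p (ZMod p)ˣ) • ((π (0, 1)).1, (0 : Fbar p)) = (0, 0) := by
      rw [hsmul, hφS, gen_inr, mul_zero]
    rw [hS, hπ1, h0, hS2] at h1
    exact hc (by simpa using congrArg Prod.fst h1)
end
end
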